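/- Let T be a subset of Fin (n+1) with σ·T = T, and suppose that the cardinality of T ∩ E is odd. Then {T' ∈ O(T) | σ·T' = T'} = {T, τ′·T} and τ′·T ≠ T. In particular the set of σ-invariant elements of O(T) has exactly two elements, which are interchanged by τ′, so its quotient by the action of τ′ is a singleton. -/

import Mathlib

open Fin.NatCast

/-! A `σ`-invariant `T` contains `n - 1` and `n` together or not at all, so `|T ∩ E|` is odd
exactly when `T` contains exactly one of `0`, `1`; the same then holds for `τ′·T`. Since `τ`
carries `0, 1` to `n - 1, n`, neither `τ·T` nor `τ·τ′·T` is `σ`-invariant, while `τ′·T` is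
(`τ′` commutes with `σ`) and differs from `T` (`τ′` swaps `0` and `1`). -/

/-- Vertices of the affine Dynkin diagram of type `D_n` are identified with
`Fin (n+1) = {0, 1, …, n}`. `sigmaD n` is the transposition exchanging `n-1` and `n`
(the unramified Galois involution). -/
def sigmaD (n : ℕ) : Fin (n + 1) → Fin (n + 1) := fun i =>
  if (i : ℕ) = n - 1 then (↑n : Fin (n + 1))
  else if (i : ℕ) = n then (↑(n - 1) : Fin (n + 1))
  else i

/-- `tauPrimeD n` exchanges `0` with `1` and `n-1` with `n`, fixing all other vertices
(the generator of `Ξ`). -/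
def tauPrimeD (n : ℕ) : Fin (n + 1) → Fin (n + 1) := fun i =>
  if (i : ℕ) = 0 then (↑(1 : ℕ) : Fin (n + 1))
  else if (i : ℕ) = 1 then (↑(0 : ℕ) : Fin (n + 1))
  else if (i : ℕ) = n - 1 then (↑n : Fin (n + 1))
  else if (i : ℕ) = n then (↑(n - 1) : Fin (n + 1))
  else i

/-- `tauD n` is the involution with `τ(0) = n-1`, `τ(1) = n`, `τ(n-1) = 0`, `τ(n) = 1` and
`τ(i) = n - i` for `2 ≤ i ≤ n-2`. -/
def tauD (n : ℕ) : Fin (n + 1) → Fin (n + 1) := fun i =>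
  if (i : ℕ) = 0 then (↑(n - 1) : Fin (n + 1))
  else if (i : ℕ) = 1 then (↑n : Fin (n + 1))
  else if (i : ℕ) = n - 1 then (↑(0 : ℕ) : Fin (n + 1))
  else if (i : ℕ) = n then (↑(1 : ℕ) : Fin (n + 1))
  else (↑(n - (i : ℕ)) : Fin (n + 1))

/-- The extremal vertices `{0, 1, n-1, n}` of the affine Dynkin diagram of type `D_n`. -/
def extremalD (n : ℕ) : Set (Fin (n + 1)) :=
  {(↑(0 : ℕ) : Fin (n + 1)), (↑(1 : ℕ) : Fin (n + 1)), (↑(n - 1) : Fin (n + 1)),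
    (↑n : Fin (n + 1))}

/-- The orbit `O(T) = {T, τ·T, τ′·T, (τ∘τ′)·T}` of a type `T` under the Klein four-group
`{id, τ, τ′, τ∘τ′}` (realizing `Ξ^nr`), acting on subsets by images. -/
def orbD (n : ℕ) (T : Set (Fin (n + 1))) : Set (Set (Fin (n + 1))) :=
  {T, tauD n '' T, tauPrimeD n '' T, (tauD n ∘ tauPrimeD n) '' T}

section Involutions

variable {α : Type*} {f : α → α} {S : Set α} {x : α}

lemma Function.Involutive.mem_image_iff (hf : f.Involutive) : x ∈ f '' S ↔ f x ∈ S :=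
  Set.mem_image_iff_of_inverse hf.leftInverse hf.rightInverse

lemma Function.Involutive.mem_iff_apply_mem_of_image_eq (hf : f.Involutive) (hS : f '' S = S) :
    x ∈ S ↔ f x ∈ S := by
  rw [← hf.mem_image_iff, hS]

end Involutions

section Parity

variable {α : Type*} {T s : Set α} {a b c d : α}

open Classical in
lemma ncard_inter_insert (ha : a ∉ s) (hs : s.Finite) :
    (T ∩ insert a s).ncard = (T ∩ s).ncard + if a ∈ T then 1 else 0 := by
  by_cases haT : a ∈ T
  · rw [Set.inter_insert_of_mem haT, if_pos haT,
      Set.ncard_insert_of_notMem (fun h ↦ ha h.2) (hs.inter_of_right T)]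
  · rw [Set.inter_insert_of_notMem haT, if_neg haT, add_zero]

open Classical in
lemma ncard_inter_singleton : (T ∩ {a}).ncard = if a ∈ T then 1 else 0 := by
  by_cases haT : a ∈ T <;> simp [haT]

/-- `c` and `d` contribute an even number to `|T ∩ {a, b, c, d}|`. -/
lemma mem_iff_notMem_of_odd_ncard_inter (hab : a ≠ b) (hac : a ≠ c) (had : a ≠ d)
    (hbc : b ≠ c) (hbd : b ≠ d) (hcd : c ≠ d) (hT : c ∈ T ↔ d ∈ T)
    (hodd : Odd (T ∩ {a, b, c, d}).ncard) : a ∈ T ↔ b ∉ T := by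
  rw [ncard_inter_insert (by simp [hab, hac, had]) (Set.toFinite _),
    ncard_inter_insert (by simp [hbc, hbd]) (Set.toFinite _),
    ncard_inter_insert (by simp [hcd]) (Set.toFinite _), ncard_inter_singleton] at hodd
  by_cases ha : a ∈ T <;> by_cases hb : b ∈ T <;> by_cases hc : c ∈ T <;>
    simp_all [Nat.odd_iff]

end Parity

section DynkinD

variable {n : ℕ}

lemma Fin.natCast_ne_of_le {j k : ℕ} (hj : j ≤ n) (hk : k ≤ n) (h : j ≠ k) :
    (j : Fin (n + 1)) ≠ k :=
  fun he ↦ h <| by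
    simpa [Fin.val_cast_of_lt (Nat.lt_succ_of_le hj), Fin.val_cast_of_lt (Nat.lt_succ_of_le hk)]
      using congrArg Fin.val he

lemma val_sigmaD (i : Fin (n + 1)) :
    (sigmaD n i : ℕ) = if (i : ℕ) = n - 1 then n else if (i : ℕ) = n then n - 1 else i := by
  unfold sigmaD
  split_ifs <;> first | rfl | exact Fin.val_cast_of_lt (by omega)

lemma val_tauPrimeD (hn : 1 ≤ n) (i : Fin (n + 1)) :
    (tauPrimeD n i : ℕ) = if (i : ℕ) = 0 then 1 else if (i : ℕ) = 1 then 0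
      else if (i : ℕ) = n - 1 then n else if (i : ℕ) = n then n - 1 else i := by
  unfold tauPrimeD
  split_ifs <;> first | rfl | exact Fin.val_cast_of_lt (by omega)

lemma val_tauD (hn : 1 ≤ n) (i : Fin (n + 1)) :
    (tauD n i : ℕ) = if (i : ℕ) = 0 then n - 1 else if (i : ℕ) = 1 then n
      else if (i : ℕ) = n - 1 then 0 else if (i : ℕ) = n then 1 else n - (i : ℕ) := by
  unfold tauD
  split_ifs <;> first | rfl | exact Fin.val_cast_of_lt (by omega)

lemma sigmaD_involutive : (sigmaD n).Involutive := fun i ↦ by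
  have := i.isLt
  rw [Fin.ext_iff, val_sigmaD, val_sigmaD]
  grind

lemma tauPrimeD_involutive (hn : 3 ≤ n) : (tauPrimeD n).Involutive := fun i ↦ by
  have := i.isLt
  rw [Fin.ext_iff, val_tauPrimeD (by omega), val_tauPrimeD (by omega)]
  grind

lemma tauD_involutive (hn : 3 ≤ n) : (tauD n).Involutive := fun i ↦ by
  have := i.isLt
  rw [Fin.ext_iff, val_tauD (by omega), val_tauD (by omega)]
  grind

lemma sigmaD_commute_tauPrimeD (hn : 3 ≤ n) : Function.Commute (sigmaD n) (tauPrimeD n) :=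
  fun i ↦ by
    have := i.isLt
    rw [Fin.ext_iff, val_sigmaD, val_tauPrimeD (by omega), val_tauPrimeD (by omega), val_sigmaD]
    grind

lemma sigmaD_natCast_sub_one : sigmaD n ↑(n - 1) = ↑n :=
  Fin.ext <| by
    rw [val_sigmaD, Fin.val_cast_of_lt (by omega), Fin.val_cast_of_lt (by omega), if_pos rfl]

lemma tauPrimeD_natCast_zero (hn : 1 ≤ n) : tauPrimeD n ↑(0 : ℕ) = ↑(1 : ℕ) :=
  Fin.ext <| by
    rw [val_tauPrimeD (by omega), Fin.val_cast_of_lt (by omega), Fin.val_cast_of_lt (by omega),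
      if_pos rfl]

lemma tauPrimeD_natCast_one (hn : 1 ≤ n) : tauPrimeD n ↑(1 : ℕ) = ↑(0 : ℕ) :=
  Fin.ext <| by
    rw [val_tauPrimeD (by omega), Fin.val_cast_of_lt (by omega), Fin.val_cast_of_lt (by omega),
      if_neg one_ne_zero, if_pos rfl]

lemma tauD_natCast_sub_one (hn : 3 ≤ n) : tauD n ↑(n - 1) = ↑(0 : ℕ) :=
  Fin.ext <| by
    rw [val_tauD (by omega), Fin.val_cast_of_lt (by omega), Fin.val_cast_of_lt (by omega)]
    grind

lemma tauD_natCast_self (hn : 2 ≤ n) : tauD n ↑n = ↑(1 : ℕ) :=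
  Fin.ext <| by
    rw [val_tauD (by omega), Fin.val_cast_of_lt (by omega), Fin.val_cast_of_lt (by omega)]
    grind

lemma mem_zero_iff_notMem_one_of_odd_ncard_inter_extremalD (hn : 3 ≤ n)
    {T : Set (Fin (n + 1))} (hσ : sigmaD n '' T = T) (hE : Odd (T ∩ extremalD n).ncard) :
    ↑(0 : ℕ) ∈ T ↔ ↑(1 : ℕ) ∉ T := by
  have hcd : ↑(n - 1) ∈ T ↔ ↑n ∈ T := by
    rw [sigmaD_involutive.mem_iff_apply_mem_of_image_eq hσ, sigmaD_natCast_sub_one]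
  refine mem_iff_notMem_of_odd_ncard_inter ?_ ?_ ?_ ?_ ?_ ?_ hcd hE
  all_goals exact Fin.natCast_ne_of_le (by omega) (by omega) (by omega)

lemma mem_zero_image_tauPrimeD_iff (hn : 3 ≤ n) {S : Set (Fin (n + 1))} :
    ↑(0 : ℕ) ∈ tauPrimeD n '' S ↔ ↑(1 : ℕ) ∈ S := by
  rw [(tauPrimeD_involutive hn).mem_image_iff, tauPrimeD_natCast_zero (by omega)]

lemma mem_one_image_tauPrimeD_iff (hn : 3 ≤ n) {S : Set (Fin (n + 1))} :
    ↑(1 : ℕ) ∈ tauPrimeD n '' S ↔ ↑(0 : ℕ) ∈ S := by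
  rw [(tauPrimeD_involutive hn).mem_image_iff, tauPrimeD_natCast_one (by omega)]

/-- `τ` carries `0, 1` to `n - 1, n`, which a `σ`-invariant set contains together or not at
all. -/
lemma sigmaD_image_tauD_image_ne (hn : 3 ≤ n) {S : Set (Fin (n + 1))}
    (hS : ↑(0 : ℕ) ∈ S ↔ ↑(1 : ℕ) ∉ S) : sigmaD n '' (tauD n '' S) ≠ tauD n '' S := by
  intro h
  have := sigmaD_involutive.mem_iff_apply_mem_of_image_eq h (x := ↑(n - 1))
  rw [sigmaD_natCast_sub_one, (tauD_involutive hn).mem_image_iff,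
    (tauD_involutive hn).mem_image_iff, tauD_natCast_sub_one hn,
    tauD_natCast_self (by omega)] at this
  tauto

end DynkinD

/-- Type `²D_n` (`n ≥ 4`): if `T` is a `σ`-invariant type such that `T ∩ E` has odd
cardinality (where `E` is the set of extremal vertices), then the `σ`-invariant elements of
the orbit `O(T)` are exactly `{T, τ′·T}`, and these two elements are distinct and
interchanged by `τ′`; so the set of `σ`-invariant elements of `O(T)` has exactly two
elements and its quotient by the action of `τ′` is a singleton. -/
theorem stmt11 (n : ℕ) (hn : 4 ≤ n) (T : Set (Fin (n + 1)))
    (hσ : sigmaD n '' T = T)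
    (hE : Odd (T ∩ extremalD n).ncard) :
    {T' ∈ orbD n T | sigmaD n '' T' = T'} = {T, tauPrimeD n '' T} ∧
    tauPrimeD n '' T ≠ T ∧
    tauPrimeD n '' (tauPrimeD n '' T) = T ∧
    {T' ∈ orbD n T | sigmaD n '' T' = T'}.ncard = 2 := by
  have hn3 : 3 ≤ n := by omega
  have hT := mem_zero_iff_notMem_one_of_odd_ncard_inter_extremalD hn3 hσ hE
  have hτ'T : ↑(0 : ℕ) ∈ tauPrimeD n '' T ↔ ↑(1 : ℕ) ∉ tauPrimeD n '' T := by
    rw [mem_zero_image_tauPrimeD_iff hn3, mem_one_image_tauPrimeD_iff hn3]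
    tauto
  have hne : tauPrimeD n '' T ≠ T := fun h ↦ by
    have h0 := mem_zero_image_tauPrimeD_iff hn3 (S := T)
    rw [h] at h0
    tauto
  have hστ'T : sigmaD n '' (tauPrimeD n '' T) = tauPrimeD n '' T := by
    rw [(sigmaD_commute_tauPrimeD hn3).set_image T, hσ]
  have hfixed : {T' ∈ orbD n T | sigmaD n '' T' = T'} = {T, tauPrimeD n '' T} := by
    ext S
    simp only [orbD, Set.mem_insert_iff, Set.mem_singleton_iff]
    constructor
    · rintro ⟨rfl | rfl | rfl | rfl, hS⟩
      · exact .inl rfl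
      · exact absurd hS (sigmaD_image_tauD_image_ne hn3 hT)
      · exact .inr rfl
      · rw [Set.image_comp] at hS
        exact absurd hS (sigmaD_image_tauD_image_ne hn3 hτ'T)
    · rintro (rfl | rfl)
      · exact ⟨.inl rfl, hσ⟩
      · exact ⟨.inr (.inr (.inl rfl)), hστ'T⟩
  exact ⟨hfixed, hne, (tauPrimeD_involutive hn3).leftInverse.image_image T,
    by rw [hfixed, Set.ncard_pair hne.symm]⟩
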